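/- Let (X, Σ) be a countably compact, Lindelöf, Hausdorff σ-topological space, I a positive bounded linear functional on C_σ(X), and μ₀ defined on σ-closed sets by μ₀(K) := inf{I(f) : f ∈ C_σ(X), f ≥ χ_K}. Then for all disjoint σ-closed sets K and L, μ₀(K ∪ L) = μ₀(K) + μ₀(L). -/

import Mathlib

/-- A σ-topology on a set `X`: contains `∅` and `univ`, closed under finite
intersections and countable unions. -/
structure SigmaTopology (X : Type*) where
  IsOpen : Set X → Prop
  isOpen_empty : IsOpen ∅
  isOpen_univ : IsOpen Set.univ
  isOpen_inter : ∀ s t : Set X, IsOpen s → IsOpen t → IsOpen (s ∩ t)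
  isOpen_iUnion : ∀ f : ℕ → Set X, (∀ n, IsOpen (f n)) → IsOpen (⋃ n, f n)

namespace SigmaTopology

variable {X : Type*}

/-- A set is σ-closed if its complement is σ-open. -/
def IsClosed (T : SigmaTopology X) (s : Set X) : Prop := T.IsOpen sᶜ

/-- The σ-space is Hausdorff if distinct points have disjoint σ-open neighborhoods. -/
def Hausdorff (T : SigmaTopology X) : Prop :=
  ∀ x y : X, x ≠ y → ∃ U V : Set X, T.IsOpen U ∧ T.IsOpen V ∧ x ∈ U ∧ y ∈ V ∧ U ∩ V = ∅

/-- `K` is countably compact: every countable cover of `K` by σ-open sets has a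
finite subcover. -/
def CountablyCompactOn (T : SigmaTopology X) (K : Set X) : Prop :=
  ∀ U : ℕ → Set X, (∀ n, T.IsOpen (U n)) → K ⊆ ⋃ n, U n → ∃ s : Finset ℕ, K ⊆ ⋃ n ∈ s, U n

/-- The space is countably compact. -/
def CountablyCompact (T : SigmaTopology X) : Prop := T.CountablyCompactOn Set.univ

/-- The space is Lindelöf: every cover by σ-open sets has a countable subcover. -/
def Lindelof (T : SigmaTopology X) : Prop :=
  ∀ 𝒰 : Set (Set X), (∀ U ∈ 𝒰, T.IsOpen U) → ⋃₀ 𝒰 = Set.univ →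
    ∃ 𝒱 ⊆ 𝒰, 𝒱.Countable ∧ ⋃₀ 𝒱 = Set.univ

/-- The space is σ-normal: disjoint σ-closed sets are separated by σ-open sets. -/
def Normal (T : SigmaTopology X) : Prop :=
  ∀ A B : Set X, T.IsClosed A → T.IsClosed B → A ∩ B = ∅ →
    ∃ U V : Set X, T.IsOpen U ∧ T.IsOpen V ∧ A ⊆ U ∧ B ⊆ V ∧ U ∩ V = ∅

/-- σ-continuity of a real-valued function: preimages of open subsets of `ℝ`
are σ-open. -/
def SigmaContinuous (T : SigmaTopology X) (f : X → ℝ) : Prop :=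
  ∀ U : Set ℝ, _root_.IsOpen U → T.IsOpen (f ⁻¹' U)

end SigmaTopology

/-- Convergence of a net to a point in a σ-topological space: the net is eventually in
every σ-open set containing the point. -/
def NetConvergesTo {X A : Type*} [Preorder A] (T : SigmaTopology X) (x : A → X) (l : X) :
    Prop :=
  ∀ U : Set X, T.IsOpen U → l ∈ U → ∃ a₀ : A, ∀ a : A, a₀ ≤ a → x a ∈ U

/-- A positive bounded linear functional on `C_σ(X)`, with bound constant `C`. -/
def IsPosBddLinFunctional {X : Type*} (T : SigmaTopology X) (I : (X → ℝ) → ℝ) (C : ℝ) :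
    Prop :=
  0 ≤ C ∧
  (∀ f g : X → ℝ, T.SigmaContinuous f → T.SigmaContinuous g → I (f + g) = I f + I g) ∧
  (∀ (c : ℝ) (f : X → ℝ), T.SigmaContinuous f → I (c • f) = c * I f) ∧
  (∀ f : X → ℝ, T.SigmaContinuous f → 0 ≤ f → 0 ≤ I f) ∧
  (∀ f : X → ℝ, T.SigmaContinuous f → |I f| ≤ C * ⨆ x, |f x|)

/-- `μ₀ K = inf { I f : f ∈ C_σ(X), f ≥ χ_K }`. -/
noncomputable def mu0 {X : Type*} (T : SigmaTopology X) (I : (X → ℝ) → ℝ) (K : Set X) : ℝ :=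
  sInf (I '' {f : X → ℝ | T.SigmaContinuous f ∧ ∀ x, K.indicator (fun _ => (1:ℝ)) x ≤ f x})

/-!
Countable compactness and the Lindelöf property make the σ-open sets a basis of a compact
Hausdorff, hence normal, topology. For it σ-continuity is ordinary continuity: an open subset of
`ℝ` is a countable union of closed sets, whose compact preimages are each covered by finitely
many σ-open sets inside the preimage of the open set. Subadditivity of `μ₀` then comes from
`f + g ≥ χ_{K ∪ L}`, and superadditivity from Urysohn's lemma: a continuous `φ` equal to `1` on
`K` and `0` on `L` splits any `h ≥ χ_{K ∪ L}` as `h φ + h (1 - φ)` with `h φ ≥ χ_K` and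
`h (1 - φ) ≥ χ_L`.
-/

open Set TopologicalSpace

namespace SigmaTopology

variable {X : Type*} (T : SigmaTopology X)

theorem isOpen_sUnion {𝒱 : Set (Set X)} (h𝒱 : 𝒱.Countable) (hopen : ∀ V ∈ 𝒱, T.IsOpen V) :
    T.IsOpen (⋃₀ 𝒱) := by
  rcases 𝒱.eq_empty_or_nonempty with rfl | hne
  · simpa using T.isOpen_empty
  · obtain ⟨e, rfl⟩ := h𝒱.exists_eq_range hne
    rw [sUnion_range]
    exact T.isOpen_iUnion e fun n => hopen _ (mem_range_self n)

theorem sigmaContinuous_const (c : ℝ) : T.SigmaContinuous fun _ => c := by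
  classical
  intro U _
  rw [preimage_const]
  split_ifs
  exacts [T.isOpen_univ, T.isOpen_empty]

theorem exists_finite_subcover (hcc : T.CountablyCompact) (hl : T.Lindelof)
    {𝒰 : Set (Set X)} (hopen : ∀ U ∈ 𝒰, T.IsOpen U) (hcov : ⋃₀ 𝒰 = univ) :
    ∃ 𝒱 ⊆ 𝒰, 𝒱.Finite ∧ ⋃₀ 𝒱 = univ := by
  obtain ⟨𝒱, h𝒱𝒰, h𝒱, hcov𝒱⟩ := hl 𝒰 hopen hcov
  rcases 𝒱.eq_empty_or_nonempty with rfl | hne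
  · exact ⟨∅, empty_subset _, finite_empty, hcov𝒱⟩
  obtain ⟨e, rfl⟩ := h𝒱.exists_eq_range hne
  obtain ⟨s, hs⟩ := hcc e (fun n => hopen _ (h𝒱𝒰 (mem_range_self n)))
    (by rw [← sUnion_range, hcov𝒱])
  refine ⟨e '' s, (image_subset_range _ _).trans h𝒱𝒰, s.finite_toSet.image e,
    univ_subset_iff.1 ?_⟩
  rwa [sUnion_image]

theorem isTopologicalBasis_generateFrom :
    IsTopologicalBasis (t := generateFrom {s | T.IsOpen s}) {s | T.IsOpen s} :=
  letI : TopologicalSpace X := generateFrom {s | T.IsOpen s}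
  ⟨fun s hs t ht _ hx => ⟨s ∩ t, T.isOpen_inter s t hs ht, hx, subset_rfl⟩,
    sUnion_eq_univ_iff.2 fun x => ⟨univ, T.isOpen_univ, mem_univ x⟩, rfl⟩

variable {T} [TopologicalSpace X] (hT : IsTopologicalBasis {s | T.IsOpen s})
include hT

theorem compactSpace_of_isTopologicalBasis (hcc : T.CountablyCompact) (hl : T.Lindelof) :
    CompactSpace X := by
  refine ⟨isCompact_generateFrom hT.eq_generateFrom fun 𝒰 h𝒰 hcov => ?_⟩
  obtain ⟨𝒱, h𝒱𝒰, h𝒱, hcov𝒱⟩ :=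
    T.exists_finite_subcover hcc hl (fun U hU => h𝒰 hU) (univ_subset_iff.1 hcov)
  exact ⟨𝒱, h𝒱𝒰, h𝒱, hcov𝒱.symm.subset⟩

theorem t2Space_of_isTopologicalBasis (hh : T.Hausdorff) : T2Space X := by
  refine ⟨fun x y hxy => ?_⟩
  obtain ⟨U, V, hU, hV, hxU, hyV, hUV⟩ := hh x y hxy
  exact ⟨U, V, hT.isOpen hU, hT.isOpen hV, hxU, hyV, disjoint_iff_inter_eq_empty.2 hUV⟩

theorem exists_isOpen_between {K U : Set X} (hK : IsCompact K) (hU : _root_.IsOpen U)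
    (hKU : K ⊆ U) : ∃ V, T.IsOpen V ∧ K ⊆ V ∧ V ⊆ U := by
  obtain ⟨𝒱, h𝒱, h𝒱fin, hK𝒱⟩ :=
    hK.elim_finite_subcover_image (c := id) (b := {V | T.IsOpen V ∧ V ⊆ U})
      (fun V hV => hT.isOpen hV.1) (by
        simpa only [id, sUnion_eq_biUnion, mem_ofPred_eq] using
          Subset.trans hKU (hT.open_eq_sUnion' hU).subset)
  refine ⟨⋃₀ 𝒱, T.isOpen_sUnion h𝒱fin.countable fun V hV => (h𝒱 hV).1,
    by simpa [sUnion_eq_biUnion] using hK𝒱, sUnion_subset fun V hV => (h𝒱 hV).2⟩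

theorem sigmaContinuous_iff_continuous [CompactSpace X] {f : X → ℝ} :
    T.SigmaContinuous f ↔ Continuous f := by
  refine ⟨fun hf => continuous_def.2 fun W hW => hT.isOpen (hf W hW), fun hf W hW => ?_⟩
  obtain ⟨F, hF, hFW, rfl, -⟩ := hW.exists_iUnion_isClosed
  choose V hV hFV hVW using fun n =>
    exists_isOpen_between hT ((hF n).preimage hf).isCompact (hW.preimage hf)
      (preimage_mono (hFW n))
  have : f ⁻¹' ⋃ n, F n = ⋃ n, V n :=
    (iUnion_subset hVW).antisymm' (by rw [preimage_iUnion]; exact iUnion_mono hFV)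
  rw [this]
  exact T.isOpen_iUnion V hV

end SigmaTopology

section Mu0

variable {X : Type*} {T : SigmaTopology X} {I : (X → ℝ) → ℝ} {C : ℝ} {K L : Set X}

theorem indicator_one_le_iff {f : X → ℝ} :
    (∀ x, K.indicator (fun _ => (1 : ℝ)) x ≤ f x) ↔ (∀ x, 0 ≤ f x) ∧ ∀ x ∈ K, 1 ≤ f x :=
  ⟨fun h => ⟨fun x => (indicator_nonneg (fun _ _ => zero_le_one) x).trans (h x),
      fun x hx => by simpa [indicator_of_mem hx] using h x⟩,
    fun ⟨h0, h1⟩ x => indicator_apply_le' (h1 x) fun _ => h0 x⟩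

theorem mu0_le (hI : IsPosBddLinFunctional T I C) {f : X → ℝ} (hf : T.SigmaContinuous f)
    (hf0 : ∀ x, 0 ≤ f x) (hf1 : ∀ x ∈ K, 1 ≤ f x) : mu0 T I K ≤ I f := by
  obtain ⟨-, -, -, hpos, -⟩ := hI
  refine csInf_le ⟨0, ?_⟩ ⟨f, ⟨hf, indicator_one_le_iff.2 ⟨hf0, hf1⟩⟩, rfl⟩
  rintro _ ⟨g, ⟨hg, hKg⟩, rfl⟩
  exact hpos g hg (indicator_one_le_iff.1 hKg).1

theorem le_mu0 {c : ℝ}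
    (h : ∀ f, T.SigmaContinuous f → (∀ x, 0 ≤ f x) → (∀ x ∈ K, 1 ≤ f x) → c ≤ I f) :
    c ≤ mu0 T I K := by
  refine le_csInf ⟨_, ⟨fun _ => 1, ⟨T.sigmaContinuous_const 1, ?_⟩, rfl⟩⟩ ?_
  · exact indicator_one_le_iff.2 ⟨fun _ => zero_le_one, fun _ _ => le_rfl⟩
  · rintro _ ⟨f, ⟨hf, hKf⟩, rfl⟩
    exact h f hf (indicator_one_le_iff.1 hKf).1 (indicator_one_le_iff.1 hKf).2

variable [TopologicalSpace X] (hC : ∀ f : X → ℝ, T.SigmaContinuous f ↔ Continuous f)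
include hC

theorem mu0_union_le (hI : IsPosBddLinFunctional T I C) :
    mu0 T I (K ∪ L) ≤ mu0 T I K + mu0 T I L := by
  have key : ∀ f, T.SigmaContinuous f → (∀ x, 0 ≤ f x) → (∀ x ∈ K, 1 ≤ f x) →
      mu0 T I (K ∪ L) - I f ≤ mu0 T I L := fun f hf hf0 hf1 => le_mu0 fun g hg hg0 hg1 => by
    have hfg : mu0 T I (K ∪ L) ≤ I (f + g) := by
      refine mu0_le hI ((hC _).2 (((hC f).1 hf).add ((hC g).1 hg)))
        (fun x => add_nonneg (hf0 x) (hg0 x)) fun x hx => ?_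
      rcases hx with hx | hx
      · linarith [hf1 x hx, hg0 x, show (f + g) x = f x + g x from rfl]
      · linarith [hf0 x, hg1 x hx, show (f + g) x = f x + g x from rfl]
    rw [hI.2.1 f g hf hg] at hfg
    linarith
  have : mu0 T I (K ∪ L) - mu0 T I L ≤ mu0 T I K :=
    le_mu0 fun f hf hf0 hf1 => sub_le_comm.1 (key f hf hf0 hf1)
  linarith

theorem add_le_mu0_union [NormalSpace X] (hI : IsPosBddLinFunctional T I C)
    (hK : IsClosed K) (hL : IsClosed L) (hd : Disjoint K L) :
    mu0 T I K + mu0 T I L ≤ mu0 T I (K ∪ L) := by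
  obtain ⟨φ, hφL, hφK, hφ01⟩ := exists_continuous_zero_one_of_isClosed hL hK hd.symm
  refine le_mu0 fun h hh hh0 hh1 => ?_
  have hcont := (hC h).1 hh
  have hf₁ : T.SigmaContinuous (h * φ) := (hC _).2 (hcont.mul φ.continuous)
  have hf₂ : T.SigmaContinuous (h * (1 - φ)) :=
    (hC _).2 (hcont.mul (continuous_const.sub φ.continuous))
  have hsplit : I h = I (h * φ) + I (h * (1 - φ)) := by
    rw [← hI.2.1 _ _ hf₁ hf₂, ← mul_add, add_sub_cancel, mul_one]
  have hK_le : mu0 T I K ≤ I (h * φ) :=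
    mu0_le hI hf₁ (fun x => mul_nonneg (hh0 x) (hφ01 x).1)
      fun x hx => by simpa [hφK hx] using hh1 x (Or.inl hx)
  have hL_le : mu0 T I L ≤ I (h * (1 - φ)) :=
    mu0_le hI hf₂ (fun x => mul_nonneg (hh0 x) (sub_nonneg.2 (hφ01 x).2))
      fun x hx => by simpa [hφL hx] using hh1 x (Or.inr hx)
  linarith

end Mu0

/-- (K3): additivity of `μ₀` on disjoint σ-closed sets. -/
theorem mu0_additive {X : Type*} (T : SigmaTopology X)
    (hcc : T.CountablyCompact) (hl : T.Lindelof) (hh : T.Hausdorff)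
    (I : (X → ℝ) → ℝ) (C : ℝ) (hI : IsPosBddLinFunctional T I C)
    (K L : Set X) (hK : T.IsClosed K) (hL : T.IsClosed L) (hd : K ∩ L = ∅) :
    mu0 T I (K ∪ L) = mu0 T I K + mu0 T I L := by
  let _ : TopologicalSpace X := generateFrom {s | T.IsOpen s}
  have hT := T.isTopologicalBasis_generateFrom
  have := SigmaTopology.compactSpace_of_isTopologicalBasis hT hcc hl
  have := SigmaTopology.t2Space_of_isTopologicalBasis hT hh
  have hC (f : X → ℝ) := SigmaTopology.sigmaContinuous_iff_continuous hT (f := f)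
  have hclosed {S : Set X} (hS : T.IsClosed S) : IsClosed S := isOpen_compl_iff.1 (hT.isOpen hS)
  exact le_antisymm (mu0_union_le hC hI)
    (add_le_mu0_union hC hI (hclosed hK) (hclosed hL) (disjoint_iff_inter_eq_empty.2 hd))
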